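/- arXiv:0708.2828 — 3 statements merged into one kernel-verified Lean document; each statement's English description precedes it below -/
import Mathlib

section
/- Let a ≥ 0 and γ > a + 1. Suppose g and ζ are Lebesgue measurable on ℝ and |ζ(x)| ≤ C₁(1+|x|)^{-γ} for all x. Then for 1 ≤ q, (∫ |(g*ζ)(x)|^q (1+|x|)^{aq} dx)^{1/q} ≤ C·C₁ (∫ |g(x)|^q (1+|x|)^{aq} dx)^{1/q}, where C depends only on a, γ, q. -/
/-!
The weight is submultiplicative, `(1+|x|)^a ≤ (1+|x-y|)^a (1+|y|)^a` for `a ≥ 0`, so `|g*ζ|`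
times the weight is dominated pointwise by the convolution of `|g|` times the weight with the
kernel `C₁(1+|y|)^(a-γ)`, which is integrable because `γ - a > 1`. Young's inequality
`‖k*f‖_q ≤ ‖k‖_1 ‖f‖_q` then concludes; it follows from Hölder's inequality for the measure
`k(y) dy`, which gives `(k*f)^q ≤ ‖k‖_1^(q-1) (k*f^q)`, and Tonelli.
-/

open MeasureTheory
open scoped ENNReal

namespace ENNReal

variable {α : Type*} [MeasurableSpace α] {μ : Measure α}

theorem lintegral_mul_rpow_le {f k : α → ℝ≥0∞} (hf : AEMeasurable f μ) (hk : AEMeasurable k μ)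
    {q : ℝ} (hq : 1 ≤ q) :
    (∫⁻ a, k a * f a ∂μ) ^ q ≤ (∫⁻ a, k a ∂μ) ^ (q - 1) * ∫⁻ a, k a * f a ^ q ∂μ := by
  have hq0 : 0 < q := by linarith
  have hq' : 0 ≤ 1 - q⁻¹ := sub_nonneg.2 (inv_le_one_of_one_le₀ hq)
  have hsplit : ∀ a, k a * f a = (k a * f a ^ q) ^ q⁻¹ * k a ^ (1 - q⁻¹) := fun a => by
    rw [mul_rpow_of_nonneg _ _ (by positivity), ← rpow_mul, mul_inv_cancel₀ hq0.ne', rpow_one,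
      mul_right_comm, ← rpow_add_of_nonneg _ _ (by positivity) hq', add_sub_cancel, rpow_one]
  calc (∫⁻ a, k a * f a ∂μ) ^ q
      = (∫⁻ a, (k a * f a ^ q) ^ q⁻¹ * k a ^ (1 - q⁻¹) ∂μ) ^ q := by
        rw [lintegral_congr hsplit]
    _ ≤ ((∫⁻ a, k a * f a ^ q ∂μ) ^ q⁻¹ * (∫⁻ a, k a ∂μ) ^ (1 - q⁻¹)) ^ q :=
        rpow_le_rpow (lintegral_mul_norm_pow_le (hk.mul (hf.pow_const q)) hk (by positivity) hq'
          (add_sub_cancel _ _)) hq0.le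
    _ = (∫⁻ a, k a ∂μ) ^ (q - 1) * ∫⁻ a, k a * f a ^ q ∂μ := by
        rw [mul_rpow_of_nonneg _ _ hq0.le, ← rpow_mul, ← rpow_mul, inv_mul_cancel₀ hq0.ne',
          rpow_one, sub_mul, one_mul, inv_mul_cancel₀ hq0.ne', mul_comm]

theorem ofReal_rpow_mul_rpow_mul {c t a q : ℝ} (hc : 0 ≤ c) (ht : 0 ≤ t) (hq : 0 ≤ q) :
    ENNReal.ofReal (c ^ q * t ^ (a * q)) = (ENNReal.ofReal c * ENNReal.ofReal (t ^ a)) ^ q := by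
  rw [ENNReal.mul_rpow_of_nonneg _ _ hq, ENNReal.ofReal_rpow_of_nonneg hc hq,
    ENNReal.ofReal_rpow_of_nonneg (by positivity) hq, ← Real.rpow_mul ht,
    ENNReal.ofReal_mul (by positivity)]

end ENNReal

section Young

variable {G : Type*} [MeasurableSpace G] [AddGroup G] [MeasurableAdd₂ G] [MeasurableNeg G]
  {μ : Measure G} [μ.IsAddLeftInvariant] [SFinite μ] {f g : G → ℝ≥0∞}

theorem lintegral_lconvolution (hf : Measurable f) (hg : Measurable g) :
    ∫⁻ x, (f ⋆ₗ[μ] g) x ∂μ = (∫⁻ x, f x ∂μ) * ∫⁻ x, g x ∂μ := by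
  simp only [lconvolution_def]
  rw [lintegral_lintegral_swap (by fun_prop), ← lintegral_mul_const _ hf]
  refine lintegral_congr fun y => ?_
  rw [lintegral_const_mul _ (by fun_prop), lintegral_add_left_eq_self g (-y)]

theorem lintegral_lconvolution_rpow_le (hf : Measurable f) (hg : Measurable g)
    {q : ℝ} (hq : 1 ≤ q) :
    ∫⁻ x, (f ⋆ₗ[μ] g) x ^ q ∂μ ≤ (∫⁻ x, f x ∂μ) ^ q * ∫⁻ x, g x ^ q ∂μ := by
  have hpow : (∫⁻ x, f x ∂μ) ^ (q - 1) * ∫⁻ x, f x ∂μ = (∫⁻ x, f x ∂μ) ^ q := by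
    simpa using (ENNReal.rpow_add_of_nonneg (x := ∫⁻ x, f x ∂μ) (q - 1) 1 (by linarith)
      zero_le_one).symm
  calc ∫⁻ x, (f ⋆ₗ[μ] g) x ^ q ∂μ
      ≤ ∫⁻ x, (∫⁻ y, f y ∂μ) ^ (q - 1) * (f ⋆ₗ[μ] (g · ^ q)) x ∂μ :=
        lintegral_mono fun x => ENNReal.lintegral_mul_rpow_le
          (by fun_prop) hf.aemeasurable hq
    _ = (∫⁻ x, f x ∂μ) ^ q * ∫⁻ x, g x ^ q ∂μ := by
        rw [lintegral_const_mul _ (measurable_lconvolution μ hf (hg.pow_const q)),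
          lintegral_lconvolution hf (hg.pow_const q), ← mul_assoc, hpow]

theorem lintegral_lconvolution_rpow_rpow_le (hf : Measurable f) (hg : Measurable g) {q : ℝ}
    (hq : 1 ≤ q) :
    (∫⁻ x, (f ⋆ₗ[μ] g) x ^ q ∂μ) ^ (1 / q) ≤ (∫⁻ x, f x ∂μ) * (∫⁻ x, g x ^ q ∂μ) ^ (1 / q) := by
  have hq0 : 0 < q := by linarith
  calc (∫⁻ x, (f ⋆ₗ[μ] g) x ^ q ∂μ) ^ (1 / q)
      ≤ ((∫⁻ x, f x ∂μ) ^ q * ∫⁻ x, g x ^ q ∂μ) ^ (1 / q) := by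
        gcongr
        exact lintegral_lconvolution_rpow_le hf hg hq
    _ = (∫⁻ x, f x ∂μ) * (∫⁻ x, g x ^ q ∂μ) ^ (1 / q) := by
        rw [ENNReal.mul_rpow_of_nonneg _ _ (by positivity), ← ENNReal.rpow_mul,
          mul_one_div_cancel hq0.ne', ENNReal.rpow_one]

end Young

theorem one_add_norm_rpow_le_mul {E : Type*} [SeminormedAddGroup E] {a : ℝ} (ha : 0 ≤ a)
    (x y : E) : (1 + ‖x‖) ^ a ≤ (1 + ‖x - y‖) ^ a * (1 + ‖y‖) ^ a := by
  rw [← Real.mul_rpow (by positivity) (by positivity)]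
  refine Real.rpow_le_rpow (by positivity) ?_ ha
  have htri := norm_add_le (x - y) y
  rw [sub_add_cancel] at htri
  nlinarith [norm_nonneg (x - y), norm_nonneg y]

theorem mul_one_add_abs_rpow_le {a γ C₁ r : ℝ} (ha : 0 ≤ a) (hr0 : 0 ≤ r) {x y : ℝ}
    (hr : r ≤ C₁ * (1 + |y|) ^ (-γ)) :
    r * (1 + |x|) ^ a ≤ C₁ * (1 + |y|) ^ (a - γ) * (1 + |x - y|) ^ a := by
  calc r * (1 + |x|) ^ a
      ≤ C₁ * (1 + |y|) ^ (-γ) * ((1 + |x - y|) ^ a * (1 + |y|) ^ a) := by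
        gcongr
        · exact hr0.trans hr
        · simpa only [Real.norm_eq_abs] using one_add_norm_rpow_le_mul ha x y
    _ = C₁ * (1 + |y|) ^ (a - γ) * (1 + |x - y|) ^ a := by
        rw [show a - γ = -γ + a by ring, Real.rpow_add (by positivity)]
        ring

theorem enorm_integral_mul_le_lconvolution {R : Type*} [NormedRing R] [NormedSpace ℝ R]
    {a γ C₁ : ℝ} (ha : 0 ≤ a) {g ζ : ℝ → R} (hζ : ∀ y, ‖ζ y‖ ≤ C₁ * (1 + |y|) ^ (-γ)) (x : ℝ) :
    ‖∫ y, g (x - y) * ζ y‖ₑ * ENNReal.ofReal ((1 + |x|) ^ a) ≤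
      ((fun y => ENNReal.ofReal (C₁ * (1 + |y|) ^ (a - γ))) ⋆ₗ
        (fun t => ‖g t‖ₑ * ENNReal.ofReal ((1 + |t|) ^ a))) x := by
  have hC₁ : 0 ≤ C₁ := by simpa using (norm_nonneg _).trans (hζ 0)
  calc ‖∫ y, g (x - y) * ζ y‖ₑ * ENNReal.ofReal ((1 + |x|) ^ a)
      ≤ (∫⁻ y, ‖g (x - y) * ζ y‖ₑ) * ENNReal.ofReal ((1 + |x|) ^ a) := by
        gcongr
        exact enorm_integral_le_lintegral_enorm _
    _ = ∫⁻ y, ‖g (x - y) * ζ y‖ₑ * ENNReal.ofReal ((1 + |x|) ^ a) :=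
        (lintegral_mul_const' _ _ ENNReal.ofReal_ne_top).symm
    _ ≤ _ := by
        refine lintegral_mono fun y => ?_
        calc ‖g (x - y) * ζ y‖ₑ * ENNReal.ofReal ((1 + |x|) ^ a)
            ≤ ‖g (x - y)‖ₑ * ENNReal.ofReal (‖ζ y‖ * (1 + |x|) ^ a) := by
              rw [ENNReal.ofReal_mul (norm_nonneg _), ofReal_norm, ← mul_assoc]
              gcongr
              simpa only [enorm_eq_nnnorm, ← ENNReal.coe_mul, ENNReal.coe_le_coe]
                using nnnorm_mul_le _ _
          _ ≤ ‖g (x - y)‖ₑ * ENNReal.ofReal (C₁ * (1 + |y|) ^ (a - γ) * (1 + |x - y|) ^ a) := by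
              gcongr _ * ENNReal.ofReal ?_
              exact mul_one_add_abs_rpow_le ha (norm_nonneg _) (hζ y)
          _ = _ := by
              rw [neg_add_eq_sub, ENNReal.ofReal_mul (by positivity)]
              ring

theorem exists_lintegral_mul_one_add_abs_rpow_le {s : ℝ} (hs : s < -1) :
    ∃ C : ℝ, 0 < C ∧ ∀ C₁ : ℝ, 0 ≤ C₁ →
      ∫⁻ y : ℝ, ENNReal.ofReal (C₁ * (1 + |y|) ^ s) ≤ ENNReal.ofReal (C * C₁) := by
  set I := ∫⁻ y : ℝ, ENNReal.ofReal ((1 + |y|) ^ s)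
  have hI : I ≠ ⊤ := by
    simpa using (finite_integral_one_add_norm (E := ℝ) (μ := volume) (r := -s)
      (by simp; linarith)).ne
  refine ⟨I.toReal + 1, by positivity, fun C₁ hC₁ => ?_⟩
  calc ∫⁻ y, ENNReal.ofReal (C₁ * (1 + |y|) ^ s)
      = ENNReal.ofReal C₁ * I := by
        simp_rw [ENNReal.ofReal_mul hC₁]
        exact lintegral_const_mul _ (by fun_prop)
    _ ≤ ENNReal.ofReal C₁ * ENNReal.ofReal (I.toReal + 1) := by
        gcongr
        exact (ENNReal.le_ofReal_iff_toReal_le hI (by positivity)).2 (by linarith)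
    _ = ENNReal.ofReal ((I.toReal + 1) * C₁) := by
        rw [mul_comm, ENNReal.ofReal_mul (by positivity)]

/-- Weighted convolution inequality: if `|ζ(x)| ≤ C₁ (1+|x|)^(-γ)` with `γ > a+1`, then
`‖(g*ζ)·(1+|x|)^a‖_q ≤ C C₁ ‖g·(1+|x|)^a‖_q`, with `C = C(a,γ,q)`. -/
theorem stmt_0 (a γ q : ℝ) (ha : 0 ≤ a) (hγ : γ > a + 1) (hq : 1 ≤ q) :
    ∃ C : ℝ, 0 < C ∧
      ∀ (g ζ : ℝ → ℂ) (C₁ : ℝ), Measurable g → Measurable ζ →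
        (∀ x : ℝ, ‖ζ x‖ ≤ C₁ * (1 + |x|) ^ (-γ)) →
        (∫⁻ x : ℝ, ENNReal.ofReal (‖∫ y : ℝ, g (x - y) * ζ y‖ ^ q * (1 + |x|) ^ (a * q)))
            ^ (1 / q)
          ≤ ENNReal.ofReal (C * C₁) *
            (∫⁻ x : ℝ, ENNReal.ofReal (‖g x‖ ^ q * (1 + |x|) ^ (a * q))) ^ (1 / q) := by
  obtain ⟨C, hC, hkernel⟩ := exists_lintegral_mul_one_add_abs_rpow_le (s := a - γ) (by linarith)
  refine ⟨C, hC, fun g ζ C₁ hg _ hζ => ?_⟩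
  have hC₁ : 0 ≤ C₁ := by simpa using (norm_nonneg _).trans (hζ 0)
  have hweight : ∀ c x : ℝ, 0 ≤ c → ENNReal.ofReal (c ^ q * (1 + |x|) ^ (a * q)) =
      (ENNReal.ofReal c * ENNReal.ofReal ((1 + |x|) ^ a)) ^ q := fun c x hc =>
    ENNReal.ofReal_rpow_mul_rpow_mul hc (by positivity) (by linarith)
  calc (∫⁻ x, ENNReal.ofReal (‖∫ y, g (x - y) * ζ y‖ ^ q * (1 + |x|) ^ (a * q))) ^ (1 / q)
      = (∫⁻ x, (‖∫ y, g (x - y) * ζ y‖ₑ * ENNReal.ofReal ((1 + |x|) ^ a)) ^ q) ^ (1 / q) := by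
        simp_rw [hweight _ _ (norm_nonneg _), ofReal_norm]
    _ ≤ (∫⁻ x, ((fun y => ENNReal.ofReal (C₁ * (1 + |y|) ^ (a - γ))) ⋆ₗ
          (fun t => ‖g t‖ₑ * ENNReal.ofReal ((1 + |t|) ^ a))) x ^ q) ^ (1 / q) := by
        gcongr with x
        exact enorm_integral_mul_le_lconvolution ha hζ x
    _ ≤ (∫⁻ y, ENNReal.ofReal (C₁ * (1 + |y|) ^ (a - γ))) *
          (∫⁻ x, (‖g x‖ₑ * ENNReal.ofReal ((1 + |x|) ^ a)) ^ q) ^ (1 / q) :=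
        lintegral_lconvolution_rpow_rpow_le (by fun_prop) (by fun_prop) hq
    _ = (∫⁻ y, ENNReal.ofReal (C₁ * (1 + |y|) ^ (a - γ))) *
          (∫⁻ x, ENNReal.ofReal (‖g x‖ ^ q * (1 + |x|) ^ (a * q))) ^ (1 / q) := by
        simp_rw [hweight _ _ (norm_nonneg _), ofReal_norm]
    _ ≤ ENNReal.ofReal (C * C₁) *
          (∫⁻ x, ENNReal.ofReal (‖g x‖ ^ q * (1 + |x|) ^ (a * q))) ^ (1 / q) := by
        gcongr
        exact hkernel C₁ hC₁
end

section
/- Let d ≥ 1, N > 0, and suppose k : ℝ → ℂ satisfies |k(x)| ≤ C for all x. Then for 1 ≤ q ≤ 2, (∫₀^∞ (∫_{-∞}^∞ (1+|u|)^{-N}|f(r+u)|(r+u)^{d-1}(1+|r+u|)^{-(d-1)/2} 1_{r+u>0} du)^q (1+r)^{(d-1)(1-q/2)} dr)^{1/q} ≤ C' ‖f‖_{L^q((0,∞), s^{d-1}ds)}, provided N > (d-1)(1-q/2) + 1. -/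
open MeasureTheory Set Real
open scoped ENNReal

/-!
With `a = (d - 1)(1 - q/2)`, write `(1 + r)^a = ((1 + r)^(a/q))^q` and use Peetre's inequality
`1 + r ≤ (1 + |r + u|)(1 + |u|)` to move `(1 + r)^(a/q)` onto the two factors. Since
`s^(d-1) (1 + s)^(-(d-1)/2) ≤ s^((d-1)/q) (1 + s)^(-a/q)`, the inner integral is dominated by the
correlation of the kernel `(1 + |u|)^(-(N - a/q))` with `F s = |f s| s^((d-1)/q) 1_{s>0}`.
The kernel is integrable because `N - a/q > 1`, and `‖F‖_{L^q(ds)} = ‖f‖_{L^q(μ_d)}`, so Young's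
inequality `L¹ ⋆ L^q → L^q` (Hölder, Tonelli and translation invariance) gives the bound.
-/

lemma one_add_abs_le_mul_one_add_abs (x y : ℝ) : 1 + |x| ≤ (1 + |x + y|) * (1 + |y|) := by
  have h : |x| ≤ |x + y| + |y| := by simpa using abs_sub (x + y) y
  nlinarith [abs_nonneg (x + y), abs_nonneg y]

lemma rpow_mul_one_add_rpow_neg_half_le {s e q : ℝ} (hs : 0 < s) (he : 0 ≤ e) (hq : 1 ≤ q) :
    s ^ e * (1 + s) ^ (-(e / 2)) ≤ s ^ (e / q) * (1 + s) ^ (-(e * (1 - q / 2) / q)) := by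
  have hq0 : 0 < q := by linarith
  have h1q : 0 ≤ e * (1 - 1 / q) :=
    mul_nonneg he (sub_nonneg.2 ((div_le_one hq0).2 hq))
  calc s ^ e * (1 + s) ^ (-(e / 2))
      = s ^ (e / q) * s ^ (e * (1 - 1 / q)) * (1 + s) ^ (-(e / 2)) := by
        rw [← rpow_add hs]; congr 2; field_simp; ring
    _ ≤ s ^ (e / q) * (1 + s) ^ (e * (1 - 1 / q)) * (1 + s) ^ (-(e / 2)) := by
        gcongr; linarith
    _ = s ^ (e / q) * (1 + s) ^ (-(e * (1 - q / 2) / q)) := by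
        rw [mul_assoc, ← rpow_add (by linarith)]; congr 2; field_simp; ring

lemma kernel_mul_weight_le {e N q r u : ℝ} (he : 0 ≤ e) (hq1 : 1 ≤ q) (hq2 : q ≤ 2)
    (hr : 0 ≤ r) (hru : 0 < r + u) :
    (1 + |u|) ^ (-N) * (r + u) ^ e * (1 + |r + u|) ^ (-(e / 2)) *
        (1 + r) ^ (e * (1 - q / 2) / q)
      ≤ (1 + |u|) ^ (-(N - e * (1 - q / 2) / q)) * (r + u) ^ (e / q) := by
  set b := e * (1 - q / 2) / q
  have hb : 0 ≤ b := div_nonneg (mul_nonneg he (by linarith)) (by linarith)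
  have hu : 0 < 1 + |u| := by positivity
  have hs : 0 < 1 + (r + u) := by linarith
  have peetre : (1 + r) ^ b ≤ (1 + (r + u)) ^ b * (1 + |u|) ^ b := by
    rw [← mul_rpow hs.le hu.le]
    gcongr
    simpa [abs_of_nonneg hr, abs_of_pos hru] using one_add_abs_le_mul_one_add_abs r u
  rw [abs_of_pos hru]
  calc (1 + |u|) ^ (-N) * (r + u) ^ e * (1 + (r + u)) ^ (-(e / 2)) * (1 + r) ^ b
      = (1 + |u|) ^ (-N) * ((r + u) ^ e * (1 + (r + u)) ^ (-(e / 2))) * (1 + r) ^ b := by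
        ring
    _ ≤ (1 + |u|) ^ (-N) * ((r + u) ^ (e / q) * (1 + (r + u)) ^ (-b)) *
          ((1 + (r + u)) ^ b * (1 + |u|) ^ b) := by
        gcongr (1 + |u|) ^ (-N) * ?_ * ?_
        exact rpow_mul_one_add_rpow_neg_half_le hru he hq1
    _ = (1 + |u|) ^ (-N + b) * (r + u) ^ (e / q) * (1 + (r + u)) ^ (-b + b) := by
        rw [rpow_add hu, rpow_add hs]; ring
    _ = (1 + |u|) ^ (-(N - b)) * (r + u) ^ (e / q) := by
        rw [neg_add_cancel, rpow_zero, mul_one, neg_sub, neg_add_eq_sub]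

theorem ENNReal.lintegral_mul_rpow_le_s7 {α : Type*} [MeasurableSpace α] {μ : Measure α}
    {w g : α → ℝ≥0∞} (hw : AEMeasurable w μ) (hg : AEMeasurable g μ) {q : ℝ} (hq : 1 ≤ q) :
    (∫⁻ a, w a * g a ∂μ) ^ q ≤ (∫⁻ a, w a ∂μ) ^ (q - 1) * ∫⁻ a, w a * g a ^ q ∂μ := by
  have hq0 : 0 < q := by linarith
  have h1q : 0 ≤ 1 - 1 / q := sub_nonneg.2 ((div_le_one hq0).2 hq)
  have split : ∀ a, w a * g a = w a ^ (1 - 1 / q) * (w a * g a ^ q) ^ (1 / q) := fun a => by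
    rw [ENNReal.mul_rpow_of_nonneg _ _ (by positivity), ← ENNReal.rpow_mul,
      mul_one_div_cancel hq0.ne', ENNReal.rpow_one, ← mul_assoc,
      ← ENNReal.rpow_add_of_nonneg _ _ h1q (by positivity), sub_add_cancel, ENNReal.rpow_one]
  calc (∫⁻ a, w a * g a ∂μ) ^ q
      ≤ ((∫⁻ a, w a ∂μ) ^ (1 - 1 / q) * (∫⁻ a, w a * g a ^ q ∂μ) ^ (1 / q)) ^ q := by
        rw [lintegral_congr split]
        gcongr
        exact ENNReal.lintegral_mul_norm_pow_le hw (hw.mul (hg.pow_const q)) h1q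
          (by positivity) (by ring)
    _ = (∫⁻ a, w a ∂μ) ^ (q - 1) * ∫⁻ a, w a * g a ^ q ∂μ := by
        rw [ENNReal.mul_rpow_of_nonneg _ _ hq0.le, ← ENNReal.rpow_mul, ← ENNReal.rpow_mul,
          one_div_mul_cancel hq0.ne', ENNReal.rpow_one]
        congr 2
        field_simp

theorem lintegral_rpow_lintegral_mul_comp_add_le {G : Type*} [MeasurableSpace G] [AddGroup G]
    [MeasurableAdd₂ G] {μ : Measure G} [SFinite μ] [μ.IsAddRightInvariant]
    {w F : G → ℝ≥0∞} (hw : Measurable w) (hF : Measurable F) {q : ℝ} (hq : 1 ≤ q) :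
    ∫⁻ r, (∫⁻ u, w u * F (r + u) ∂μ) ^ q ∂μ ≤ (∫⁻ u, w u ∂μ) ^ q * ∫⁻ s, F s ^ q ∂μ := by
  have hFq : Measurable fun p : G × G => w p.2 * F (p.1 + p.2) ^ q := by fun_prop
  calc ∫⁻ r, (∫⁻ u, w u * F (r + u) ∂μ) ^ q ∂μ
      ≤ ∫⁻ r, (∫⁻ u, w u ∂μ) ^ (q - 1) * ∫⁻ u, w u * F (r + u) ^ q ∂μ ∂μ :=
        lintegral_mono fun r =>
          ENNReal.lintegral_mul_rpow_le_s7 hw.aemeasurable (by fun_prop) hq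
    _ = (∫⁻ u, w u ∂μ) ^ (q - 1) * ∫⁻ u, w u * ∫⁻ r, F (r + u) ^ q ∂μ ∂μ := by
        rw [lintegral_const_mul _ hFq.lintegral_prod_right,
          lintegral_lintegral_swap hFq.aemeasurable]
        congr 1
        exact lintegral_congr fun u => lintegral_const_mul _ (by fun_prop)
    _ = (∫⁻ u, w u ∂μ) ^ q * ∫⁻ s, F s ^ q ∂μ := by
        simp_rw [lintegral_add_right_eq_self (fun s => F s ^ q), lintegral_mul_const _ hw,
          ← mul_assoc]
        congr 1
        simpa using (ENNReal.rpow_add_of_nonneg (q - 1) 1 (by linarith) zero_le_one).symm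

lemma ofReal_kernel_mul_weight_le {d N q r : ℝ} (hd : 1 ≤ d) (hq1 : 1 ≤ q) (hq2 : q ≤ 2)
    (hr : 0 ≤ r) (f : ℝ → ℝ) (u : ℝ) :
    ENNReal.ofReal ((1 + |u|) ^ (-N) * |f (r + u)| * (r + u) ^ (d - 1) *
        (1 + |r + u|) ^ (-((d - 1) / 2)) * (if 0 < r + u then 1 else 0)) *
        ENNReal.ofReal ((1 + r) ^ ((d - 1) * (1 - q / 2) / q))
      ≤ ENNReal.ofReal ((1 + |u|) ^ (-(N - (d - 1) * (1 - q / 2) / q))) *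
        (Ioi 0).indicator (fun s => ENNReal.ofReal (|f s| * s ^ ((d - 1) / q))) (r + u) := by
  by_cases hru : 0 < r + u
  · have kernel := mul_le_mul_of_nonneg_left
      (kernel_mul_weight_le (N := N) (sub_nonneg.2 hd) hq1 hq2 hr hru) (abs_nonneg (f (r + u)))
    rw [if_pos hru, indicator_of_mem (mem_Ioi.2 hru), ← ENNReal.ofReal_mul (by positivity),
      ← ENNReal.ofReal_mul (by positivity)]
    apply ENNReal.ofReal_le_ofReal
    linarith
  · simp [hru]

lemma lintegral_kernel_rpow_mul_weight_le {d N q r : ℝ} (hd : 1 ≤ d) (hq1 : 1 ≤ q)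
    (hq2 : q ≤ 2) (hr : 0 ≤ r) (f : ℝ → ℝ) :
    (∫⁻ u, ENNReal.ofReal ((1 + |u|) ^ (-N) * |f (r + u)| * (r + u) ^ (d - 1) *
        (1 + |r + u|) ^ (-((d - 1) / 2)) * (if 0 < r + u then 1 else 0))) ^ q *
        ENNReal.ofReal ((1 + r) ^ ((d - 1) * (1 - q / 2)))
      ≤ (∫⁻ u, ENNReal.ofReal ((1 + |u|) ^ (-(N - (d - 1) * (1 - q / 2) / q))) *
        (Ioi 0).indicator (fun s => ENNReal.ofReal (|f s| * s ^ ((d - 1) / q))) (r + u)) ^ q := by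
  have hq0 : 0 < q := by linarith
  have weight : ENNReal.ofReal ((1 + r) ^ ((d - 1) * (1 - q / 2))) =
      ENNReal.ofReal ((1 + r) ^ ((d - 1) * (1 - q / 2) / q)) ^ q := by
    rw [ENNReal.ofReal_rpow_of_pos (by positivity), ← rpow_mul (by positivity),
      div_mul_cancel₀ _ hq0.ne']
  rw [weight, ← ENNReal.mul_rpow_of_nonneg _ _ hq0.le,
    ← lintegral_mul_const' _ _ ENNReal.ofReal_ne_top]
  exact ENNReal.rpow_le_rpow
    (lintegral_mono fun u => ofReal_kernel_mul_weight_le hd hq1 hq2 hr f u) hq0.le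

lemma lintegral_indicator_rpow_eq {e q : ℝ} (hq : 0 < q) (f : ℝ → ℝ) :
    ∫⁻ s, (Ioi 0).indicator (fun s => ENNReal.ofReal (|f s| * s ^ (e / q))) s ^ q =
      ∫⁻ s in Ioi 0, ENNReal.ofReal (|f s| ^ q * s ^ e) := by
  rw [← lintegral_indicator measurableSet_Ioi]
  refine lintegral_congr fun s => ?_
  by_cases hs : 0 < s
  · rw [indicator_of_mem (mem_Ioi.2 hs), indicator_of_mem (mem_Ioi.2 hs),
      ENNReal.ofReal_rpow_of_nonneg (by positivity) hq.le, mul_rpow (abs_nonneg _) (by positivity),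
      ← rpow_mul hs.le, div_mul_cancel₀ _ hq.ne']
  · simp [indicator_of_notMem (notMem_Ioi.2 (not_lt.1 hs)), ENNReal.zero_rpow_of_pos hq]

theorem stmt_7_general (d N q : ℝ) (hd : 1 ≤ d) (hq1 : 1 ≤ q) (hq2 : q ≤ 2)
    (hN : N > (d - 1) * (1 - q / 2) + 1) :
    ∃ C' : ℝ, 0 < C' ∧
      ∀ f : ℝ → ℝ, Measurable f →
        (∫⁻ r in Ioi (0 : ℝ),
            ((∫⁻ u : ℝ, ENNReal.ofReal
                ((1 + |u|) ^ (-N) * |f (r + u)| * (r + u) ^ (d - 1) *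
                  (1 + |r + u|) ^ (-((d - 1) / 2)) *
                    (if 0 < r + u then 1 else 0))) ^ q *
              ENNReal.ofReal ((1 + r) ^ ((d - 1) * (1 - q / 2)))) ) ^ (1 / q)
          ≤ ENNReal.ofReal C' *
            (∫⁻ s in Ioi (0 : ℝ), ENNReal.ofReal (|f s| ^ q * s ^ (d - 1))) ^ (1 / q) := by
  have hq0 : 0 < q := by linarith
  set b := (d - 1) * (1 - q / 2) / q
  have hNb : 1 < N - b := by
    have : b ≤ (d - 1) * (1 - q / 2) :=
      div_le_self (mul_nonneg (by linarith) (by linarith)) hq1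
    linarith
  set w : ℝ → ℝ≥0∞ := fun u => ENNReal.ofReal ((1 + |u|) ^ (-(N - b)))
  have hw : ∫⁻ u, w u < ⊤ := by
    simpa using finite_integral_one_add_norm (E := ℝ) (μ := volume) (by simpa using hNb)
  refine ⟨(∫⁻ u, w u).toReal + 1, by positivity, fun f hf => ?_⟩
  set F := (Ioi 0).indicator fun s => ENNReal.ofReal (|f s| * s ^ ((d - 1) / q))
  have hF : Measurable F := (by fun_prop : Measurable _).indicator measurableSet_Ioi
  calc _ ≤ (∫⁻ r in Ioi 0, (∫⁻ u, w u * F (r + u)) ^ q) ^ (1 / q) := by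
        refine ENNReal.rpow_le_rpow
          (setLIntegral_mono' measurableSet_Ioi fun r hr => ?_) (by positivity)
        exact lintegral_kernel_rpow_mul_weight_le hd hq1 hq2 (le_of_lt hr) f
    _ ≤ (∫⁻ r, (∫⁻ u, w u * F (r + u)) ^ q) ^ (1 / q) := by
        gcongr
        exact Measure.restrict_le_self
    _ ≤ ((∫⁻ u, w u) ^ q * ∫⁻ s, F s ^ q) ^ (1 / q) := by
        gcongr
        exact lintegral_rpow_lintegral_mul_comp_add_le (by fun_prop) hF hq1
    _ = (∫⁻ u, w u) * (∫⁻ s, F s ^ q) ^ (1 / q) := by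
        rw [ENNReal.mul_rpow_of_nonneg _ _ (by positivity), ← ENNReal.rpow_mul,
          mul_one_div_cancel hq0.ne', ENNReal.rpow_one]
    _ ≤ _ := by
        rw [lintegral_indicator_rpow_eq hq0]
        gcongr
        exact (ENNReal.le_ofReal_iff_toReal_le hw.ne (by positivity)).2 (by linarith)

/-- Hardy-type convolution estimate underlying the transplantation inequality:
for `d ≥ 1`, `1 ≤ q ≤ 2`, `N > (d-1)(1-q/2) + 1`, and any bounded `k : ℝ → ℂ`,
`(∫₀^∞ (∫ (1+|u|)^{-N}|f(r+u)|(r+u)^{d-1}(1+|r+u|)^{-(d-1)/2} 1_{r+u>0} du)^q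
  (1+r)^{(d-1)(1-q/2)} dr)^{1/q} ≤ C' ‖f‖_{L^q(s^{d-1}ds)}`. -/
theorem stmt_7 (d N q : ℝ) (hd : 1 ≤ d) (hq1 : 1 ≤ q) (hq2 : q ≤ 2)
    (hN : N > (d - 1) * (1 - q / 2) + 1) (k : ℝ → ℂ) (C : ℝ) (hk : ∀ x, ‖k x‖ ≤ C) :
    ∃ C' : ℝ, 0 < C' ∧
      ∀ f : ℝ → ℝ, Measurable f →
        (∫⁻ r in Ioi (0 : ℝ),
            ((∫⁻ u : ℝ, ENNReal.ofReal
                ((1 + |u|) ^ (-N) * |f (r + u)| * (r + u) ^ (d - 1) *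
                  (1 + |r + u|) ^ (-((d - 1) / 2)) *
                    (if 0 < r + u then 1 else 0))) ^ q *
              ENNReal.ofReal ((1 + r) ^ ((d - 1) * (1 - q / 2)))) ) ^ (1 / q)
          ≤ ENNReal.ofReal C' *
            (∫⁻ s in Ioi (0 : ℝ), ENNReal.ofReal (|f s| ^ q * s ^ (d - 1))) ^ (1 / q) :=
  stmt_7_general d N q hd hq1 hq2 hN
end

section
/- Let d > 1, 1 < p < 2d/(d+1), and let Ω(s) = (1+s)^{-(d-1)/2} restricted to the dyadic interval I_m = [2^m, 2^{m+1}]. Then Ω·1_{I_m} belongs to the Lorentz space L^{p',1}((0,∞), s^{d-1}ds) and ‖Ω 1_{I_m}‖_{L^{p',1}(μ_d)} ≤ C · min{2^{-m(d(1/p−1/2)−1/2)}, 2^{md/p'}} for all m ∈ ℤ, where 1/p + 1/p' = 1. -/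
/-! On `I_m = [2^m, 2^{m+1}]` the function `Ω` is at most
`(1 + 2^m)^{-(d-1)/2} ≤ min(2^{-m(d-1)/2}, 1)`, and `μ_d(I_m) ≤ 2^{(m+1)d}`. A function bounded
by `A` and supported in `S` has `L^{q,1}(μ)` norm at most `μ(S)^{1/q} A`, because its level sets
above height `A` are empty. With `1/p' = 1 - 1/p` the two bounds on `Ω` give the two terms of the
minimum. -/

open MeasureTheory Set Real

/-- The measure `dμ_d = s^{d-1} ds` on `(0,∞)`. -/
noncomputable def muD (d : ℝ) : Measure ℝ :=
  (volume.restrict (Ioi (0 : ℝ))).withDensity fun s => ENNReal.ofReal (s ^ (d - 1))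

/-- The Lorentz `L^{q,1}(μ)` norm, in its distribution-function form
`‖f‖_{L^{q,1}(μ)} = ∫₀^∞ μ({s : |f(s)| > λ})^{1/q} dλ`. -/
noncomputable def lorentzOneNorm (μ : Measure ℝ) (f : ℝ → ℝ) (q : ℝ) : ENNReal :=
  ∫⁻ l in Ioi (0 : ℝ), (μ {s | l < |f s|}) ^ (1 / q)

theorem lorentzOneNorm_le_of_support_subset (μ : Measure ℝ) {f : ℝ → ℝ} {q A : ℝ}
    {S : Set ℝ} (hq : 0 < q) (hfS : Function.support f ⊆ S) (hfA : ∀ s, |f s| ≤ A) :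
    lorentzOneNorm μ f q ≤ μ S ^ (1 / q) * ENNReal.ofReal A := by
  have hlevel : ∀ l ∈ Ioi (0 : ℝ),
      μ {s | l < |f s|} ^ (1 / q) ≤ (Iio A).indicator (fun _ => μ S ^ (1 / q)) l := by
    intro l hl
    by_cases hlA : l < A
    · rw [indicator_of_mem (mem_Iio.mpr hlA)]
      refine ENNReal.rpow_le_rpow (measure_mono fun s hs => hfS fun h0 => ?_) (by positivity)
      simp only [mem_ofPred_eq, h0, abs_zero] at hs
      exact (lt_asymm hl hs).elim
    · have hempty : {s | l < |f s|} = ∅ :=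
        eq_empty_of_forall_notMem fun s hs => hlA (lt_of_lt_of_le hs (hfA s))
      rw [indicator_of_notMem (mt mem_Iio.mp hlA), hempty, measure_empty,
        ENNReal.zero_rpow_of_pos (by positivity)]
  calc lorentzOneNorm μ f q
      ≤ ∫⁻ l in Ioi (0 : ℝ), (Iio A).indicator (fun _ => μ S ^ (1 / q)) l :=
        setLIntegral_mono (measurable_const.indicator measurableSet_Iio) hlevel
    _ = μ S ^ (1 / q) * ENNReal.ofReal A := by
      rw [lintegral_indicator measurableSet_Iio, setLIntegral_const,
        Measure.restrict_apply measurableSet_Iio, Iio_inter_Ioi, Real.volume_Ioo, sub_zero]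

theorem muD_Icc_le {d a b : ℝ} (hd : 1 ≤ d) (ha : 0 ≤ a) (hab : a ≤ b) :
    muD d (Icc a b) ≤ ENNReal.ofReal (b ^ d) := by
  have hb : 0 ≤ b := ha.trans hab
  have hpow : b ^ (d - 1) * (b - a) ≤ b ^ d :=
    calc b ^ (d - 1) * (b - a) ≤ b ^ (d - 1) * b := by gcongr; linarith
      _ = b ^ d := by rw [← rpow_add_one' hb (by linarith), sub_add_cancel]
  calc muD d (Icc a b) = ∫⁻ s in Icc a b ∩ Ioi 0, ENNReal.ofReal (s ^ (d - 1)) := by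
        rw [muD, withDensity_apply _ measurableSet_Icc,
          Measure.restrict_restrict measurableSet_Icc]
    _ ≤ ∫⁻ _ in Icc a b, ENNReal.ofReal (b ^ (d - 1)) :=
        (lintegral_mono_set inter_subset_left).trans <|
          setLIntegral_mono measurable_const fun s hs =>
            ENNReal.ofReal_le_ofReal (rpow_le_rpow (ha.trans hs.1) hs.2 (by linarith))
    _ = ENNReal.ofReal (b ^ (d - 1) * (b - a)) := by
        rw [setLIntegral_const, Real.volume_Icc, ENNReal.ofReal_mul (by positivity)]
    _ ≤ ENNReal.ofReal (b ^ d) := ENNReal.ofReal_le_ofReal hpow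

theorem abs_indicator_Icc_one_add_rpow_neg_le {a b e : ℝ} (ha : 0 ≤ a) (he : 0 ≤ e)
    (s : ℝ) :
    |(Icc a b).indicator (fun s => (1 + s) ^ (-e)) s| ≤ (1 + a) ^ (-e) := by
  by_cases hs : s ∈ Icc a b
  · rw [indicator_of_mem hs, abs_of_nonneg (rpow_nonneg (by linarith [hs.1]) _)]
    exact rpow_le_rpow_of_nonpos (by linarith) (by linarith [hs.1]) (by linarith)
  · rw [indicator_of_notMem hs, abs_zero]
    exact rpow_nonneg (by linarith) _

theorem lorentzOneNorm_muD_indicator_Icc_le {d q a e : ℝ} (hd : 1 ≤ d) (hq : 0 < q)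
    (ha : 0 ≤ a) (he : 0 ≤ e) :
    lorentzOneNorm (muD d) ((Icc a (2 * a)).indicator fun s => (1 + s) ^ (-e)) q
      ≤ ENNReal.ofReal ((2 * a) ^ (d * (1 / q)) * (1 + a) ^ (-e)) := by
  refine (lorentzOneNorm_le_of_support_subset _ hq support_indicator_subset
    (abs_indicator_Icc_one_add_rpow_neg_le ha he)).trans ?_
  have h2a : 0 ≤ 2 * a := by linarith
  rw [ENNReal.ofReal_mul (by positivity), rpow_mul h2a,
    ← ENNReal.ofReal_rpow_of_nonneg (rpow_nonneg h2a d) (by positivity)]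
  gcongr
  exact muD_Icc_le hd ha (by linarith)

theorem two_mul_rpow_mul_one_add_rpow_le (x d p : ℝ) (hd : 1 ≤ d) :
    (2 * (2 : ℝ) ^ x) ^ (d * (1 - 1 / p)) * (1 + 2 ^ x) ^ (-((d - 1) / 2))
      ≤ (2 : ℝ) ^ (d * (1 - 1 / p)) *
        min ((2 : ℝ) ^ (-x * (d * (1 / p - 1 / 2) - 1 / 2)))
          ((2 : ℝ) ^ (x * d * (1 - 1 / p))) := by
  have h2x : (0 : ℝ) < 2 ^ x := rpow_pos_of_pos two_pos x
  have hA1 : (1 + (2 : ℝ) ^ x) ^ (-((d - 1) / 2)) ≤ 1 :=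
    rpow_le_one_of_one_le_of_nonpos (by linarith) (by linarith)
  have hA2 : (1 + (2 : ℝ) ^ x) ^ (-((d - 1) / 2)) ≤ (2 : ℝ) ^ (x * -((d - 1) / 2)) := by
    rw [rpow_mul zero_le_two]
    exact rpow_le_rpow_of_nonpos h2x (by linarith) (by linarith)
  rw [mul_rpow zero_le_two h2x.le, ← rpow_mul zero_le_two, mul_assoc]
  gcongr
  refine le_min ?_ ?_
  · calc (2 : ℝ) ^ (x * (d * (1 - 1 / p))) * (1 + 2 ^ x) ^ (-((d - 1) / 2))
        ≤ 2 ^ (x * (d * (1 - 1 / p))) * 2 ^ (x * -((d - 1) / 2)) := by gcongr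
      _ = 2 ^ (-x * (d * (1 / p - 1 / 2) - 1 / 2)) := by
        rw [← rpow_add two_pos]; ring_nf
  · calc (2 : ℝ) ^ (x * (d * (1 - 1 / p))) * (1 + 2 ^ x) ^ (-((d - 1) / 2))
        ≤ 2 ^ (x * (d * (1 - 1 / p))) * 1 := by gcongr
      _ = 2 ^ (x * d * (1 - 1 / p)) := by rw [mul_one, mul_assoc]

theorem stmt_8_general (d p : ℝ) (hd : 1 < d) (hp : 1 < p) :
    ∃ C : ℝ, 0 < C ∧
      ∀ m : ℤ,
        lorentzOneNorm (muD d)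
            ((Icc ((2 : ℝ) ^ m) ((2 : ℝ) ^ (m + 1))).indicator
              fun s => (1 + s) ^ (-((d - 1) / 2))) (p / (p - 1)) < ⊤ ∧
        lorentzOneNorm (muD d)
            ((Icc ((2 : ℝ) ^ m) ((2 : ℝ) ^ (m + 1))).indicator
              fun s => (1 + s) ^ (-((d - 1) / 2))) (p / (p - 1))
          ≤ ENNReal.ofReal (C *
              min ((2 : ℝ) ^ (-(m : ℝ) * (d * (1 / p - 1 / 2) - 1 / 2)))
                ((2 : ℝ) ^ ((m : ℝ) * d * (1 - 1 / p)))) := by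
  refine ⟨2 ^ (d * (1 - 1 / p)), by positivity, fun m => ?_⟩
  have hdual : 1 / (p / (p - 1)) = 1 - 1 / p := by field_simp
  have hIm : Icc ((2 : ℝ) ^ m) (2 ^ (m + 1)) = Icc (2 ^ (m : ℝ)) (2 * 2 ^ (m : ℝ)) := by
    rw [zpow_add_one₀ two_ne_zero, mul_comm, rpow_intCast]
  have hnorm := lorentzOneNorm_muD_indicator_Icc_le (a := 2 ^ (m : ℝ)) (e := (d - 1) / 2) hd.le
    (div_pos (by linarith) (by linarith) : 0 < p / (p - 1)) (by positivity) (by linarith)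
  rw [hdual] at hnorm
  have hbound :=
    hnorm.trans (ENNReal.ofReal_le_ofReal (two_mul_rpow_mul_one_add_rpow_le m d p hd.le))
  rw [hIm]
  exact ⟨hbound.trans_lt ENNReal.ofReal_lt_top, hbound⟩

/-- For `d > 1`, `1 < p < 2d/(d+1)`, the function `Ω(s) = (1+s)^{-(d-1)/2}` restricted to
`I_m = [2^m, 2^{m+1}]` belongs to `L^{p',1}(μ_d)` with
`‖Ω 1_{I_m}‖_{L^{p',1}(μ_d)} ≤ C min{2^{-m(d(1/p-1/2)-1/2)}, 2^{md/p'}}` for all `m ∈ ℤ`. -/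
theorem stmt_8 (d p : ℝ) (hd : 1 < d) (hp : 1 < p) (hp2 : p < 2 * d / (d + 1)) :
    ∃ C : ℝ, 0 < C ∧
      ∀ m : ℤ,
        lorentzOneNorm (muD d)
            ((Icc ((2 : ℝ) ^ m) ((2 : ℝ) ^ (m + 1))).indicator
              fun s => (1 + s) ^ (-((d - 1) / 2))) (p / (p - 1)) < ⊤ ∧
        lorentzOneNorm (muD d)
            ((Icc ((2 : ℝ) ^ m) ((2 : ℝ) ^ (m + 1))).indicator
              fun s => (1 + s) ^ (-((d - 1) / 2))) (p / (p - 1))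
          ≤ ENNReal.ofReal (C *
              min ((2 : ℝ) ^ (-(m : ℝ) * (d * (1 / p - 1 / 2) - 1 / 2)))
                ((2 : ℝ) ^ ((m : ℝ) * d * (1 - 1 / p)))) :=
  stmt_8_general d p hd hp
end
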